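/- If u is a path from vertex i to vertex j in KΔ, v is a path from j to i in KΔ_{T_α(A)}, and neither uv nor vu is an α-revived cycle, then vu ∈ Ker Φ if and only if uv ∈ Ker Φ. -/

import Mathlib

noncomputable section
open Classical

/-- A quiver, given by a type of vertices and a family of types of arrows. -/
structure QD : Type 1 where
  V : Type
  Ar : V → V → Type

namespace QD

variable {Q : QD}

/-- Oriented paths in a quiver, composed from left to right. -/
inductive Path (Q : QD) : Q.V → Q.V → Type
  | nil (i : Q.V) : Path Q i i
  | cons {i j k : Q.V} (a : Q.Ar i j) (p : Path Q j k) : Path Q i k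

namespace Path

/-- Concatenation of paths. -/
def comp : {i j k : Q.V} → Path Q i j → Path Q j k → Path Q i k
  | _, _, _, nil _, q => q
  | _, _, _, cons a p, q => cons a (comp p q)

/-- Length of a path. -/
def length : {i j : Q.V} → Path Q i j → ℕ
  | _, _, nil _ => 0
  | _, _, cons _ p => length p + 1

end Path

/-- A path bundled with its endpoints. -/
def PathIn (Q : QD) : Type := Σ i : Q.V, Σ j : Q.V, Path Q i j

/-- Bundle a path with its endpoints. -/
def Path.sig {i j : Q.V} (p : Path Q i j) : PathIn Q := ⟨i, j, p⟩

/-- The arrow `a` occurs in the path `p`. -/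
def Path.arrowMem {i j : Q.V} (a : Q.Ar i j) : {u v : Q.V} → Path Q u v → Prop
  | _, _, Path.nil _ => False
  | _, _, @Path.cons _ u u' _ b p =>
      (⟨u, u', b⟩ : Σ i : Q.V, Σ j : Q.V, Q.Ar i j) = ⟨i, j, a⟩ ∨ Path.arrowMem a p

end QD

/-- The path algebra of a quiver over a field `K`, described axiomatically:
an algebra with a basis indexed by the paths, multiplying by concatenation. -/
structure PathAlg (K : Type) [Field K] (Q : QD) [Fintype Q.V] where
  P : Type
  [ringP : Ring P]
  [algP : Algebra K P]
  ι : {i j : Q.V} → Q.Path i j → P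
  ι_comp : ∀ {i j k : Q.V} (p : Q.Path i j) (q : Q.Path j k), ι (p.comp q) = ι p * ι q
  ι_ortho : ∀ {i j k l : Q.V} (p : Q.Path i j) (q : Q.Path k l), j ≠ k → ι p * ι q = 0
  sum_nil : (∑ i : Q.V, ι (QD.Path.nil i)) = 1
  li : LinearIndependent K (fun p : QD.PathIn Q => ι p.2.2)
  span_top : Submodule.span K (Set.range (fun p : QD.PathIn Q => ι p.2.2)) = ⊤

attribute [instance] PathAlg.ringP PathAlg.algP

section Main

variable (K : Type) [Field K] (Q : QD) [Fintype Q.V] [∀ i j : Q.V, Fintype (Q.Ar i j)]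
variable (n : ℕ) (PA : PathAlg K Q)

/-- The relation whose `RingQuot` is the truncated quiver algebra `KΔ/R_Δ^n`:
identify with `0` the image of every path of length at least `n`. -/
def truncRel : PA.P → PA.P → Prop := fun u v =>
  v = 0 ∧ ∃ p : QD.PathIn Q, n ≤ p.2.2.length ∧ u = PA.ι p.2.2

/-- The truncated quiver algebra `A = KΔ/R_Δ^n`. -/
abbrev TA : Type := RingQuot (truncRel K Q n PA)

/-- The class in `A = KΔ/R_Δ^n` of a path of `Δ`. -/
def cls {i j : Q.V} (p : Q.Path i j) : TA K Q n PA :=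
  RingQuot.mkAlgHom K (truncRel K Q n PA) (PA.ι p)

/-- Index type for the canonical basis of the truncated algebra: paths of length `< n`. -/
abbrev Short : Type := {p : QD.PathIn Q // p.2.2.length < n}

/-- The Jacobson radical of the truncated algebra. -/
def JradA : Ideal (TA K Q n PA) := Ideal.jacobson ⊥

/-- The socle of `A` as an `A`-bimodule: the two-sided annihilator of the radical,
viewed as a `K`-subspace. -/
def socA : Submodule K (TA K Q n PA) where
  carrier := {z | ∀ r ∈ JradA K Q n PA, r * z = 0 ∧ z * r = 0}
  add_mem' := by
    intro a b ha hb r hr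
    exact ⟨by rw [mul_add, (ha r hr).1, (hb r hr).1, add_zero],
      by rw [add_mul, (ha r hr).2, (hb r hr).2, add_zero]⟩
  zero_mem' := by intro r hr; simp
  smul_mem' := by
    intro c z hz r hr
    exact ⟨by rw [Algebra.mul_smul_comm, (hz r hr).1, smul_zero],
      by rw [Algebra.smul_mul_assoc, (hz r hr).2, smul_zero]⟩

variable (basA : Module.Basis (Short Q n) K (TA K Q n PA))

/-- The dual-basis functional `p̄^*` attached to a path `p` (zero if `p` is long). -/
def coordP (p : QD.PathIn Q) : Module.Dual K (TA K Q n PA) :=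
  if h : p.2.2.length < n then basA.coord ⟨p, h⟩ else 0

variable (s : ℕ) [NeZero s] (w : ZMod s → Q.V) (x : ∀ i : ZMod s, Q.Ar (w i) (w (i + 1)))

/-- The segment `x_i x_{i+1} ⋯ x_{i+m-1}` of the fixed basic cycle `γ = x_1 ⋯ x_s`. -/
def seg : (i : ZMod s) → (m : ℕ) → Q.Path (w i) (w (i + (m : ZMod s)))
  | i, 0 => cast (congrArg (fun v : ZMod s => Q.Path (w i) (w v)) (by push_cast; ring))
      (QD.Path.nil (w i))
  | i, m + 1 => cast (congrArg (fun v : ZMod s => Q.Path (w i) (w v)) (by push_cast; ring))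
      (QD.Path.cons (x i) (seg (i + 1) m))

variable (k : K)

/-- The value `α_r(ā, b̄)` of the `r`-th summand of the `2`-cocycle attached to `γ`. -/
def aTerm {i j l : Q.V} (a : Q.Path i j) (b : Q.Path j l) (r : ZMod s) :
    Module.Dual K (TA K Q n PA) :=
  if (cls K Q n PA a ≠ 0 ∧ cls K Q n PA b ≠ 0 ∧ n ≤ (a.comp b).length ∧ (a.comp b).length < s ∧
      (a.comp b).sig = (seg Q s w x r (a.comp b).length).sig) then
    coordP K Q n PA basA
      ((seg Q s w x (r + ((a.comp b).length : ZMod s)) (s - (a.comp b).length)).sig)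
  else if (cls K Q n PA a ≠ 0 ∧ cls K Q n PA b ≠ 0 ∧ (a.comp b).length = s ∧
      (a.comp b).sig = (seg Q s w x r s).sig) then
    coordP K Q n PA basA ((QD.Path.nil (w r)).sig)
  else 0

variable (αm : TA K Q n PA →ₗ[K] TA K Q n PA →ₗ[K] Module.Dual K (TA K Q n PA))
variable (t : ℕ) (pM : Fin t → QD.PathIn Q)

/-- The ordinary quiver of the Hochschild extension algebra: the quiver `Δ` together with
one extra arrow `y_{p_m} : t(p_m) → s(p_m)` for every `m`. -/
abbrev Qe : QD where
  V := Q.V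
  Ar := fun i j => Q.Ar i j ⊕ {m : Fin t // (pM m).2.1 = i ∧ (pM m).1 = j}

/-- The inclusion of paths of `Δ` into paths of the extended quiver. -/
def embed : {i j : Q.V} → Q.Path i j → (Qe Q t pM).Path i j
  | _, _, QD.Path.nil i => QD.Path.nil (Q := Qe Q t pM) i
  | _, _, QD.Path.cons a p => QD.Path.cons (Q := Qe Q t pM) (Sum.inl a) (embed p)

/-- The number of `y`-arrows occurring in a path of the extended quiver. -/
def numY : {i j : Q.V} → (Qe Q t pM).Path i j → ℕ
  | _, _, QD.Path.nil _ => 0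
  | i, _, @QD.Path.cons _ _ j' _ a p =>
      (match (a : Q.Ar i j' ⊕ {m : Fin t // (pM m).2.1 = i ∧ (pM m).1 = j'}) with
        | Sum.inl _ => 0
        | Sum.inr _ => 1) + numY p

/-- The arrow `y_{p_m}` of the extended quiver. -/
def yArr (m : Fin t) : (Qe Q t pM).Ar (pM m).2.1 (pM m).1 := Sum.inr ⟨m, rfl, rfl⟩

/-- `C` is an `α`-revived cycle of `Δ`. -/
def IsRev {h : Q.V} (C : Q.Path h h) : Prop :=
  ∃ (j : Q.V) (a : Q.Path h j) (b : Q.Path j h),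
    0 < a.length ∧ 0 < b.length ∧ cls K Q n PA a ≠ 0 ∧ cls K Q n PA b ≠ 0 ∧
    C = a.comp b ∧ αm (cls K Q n PA a) (cls K Q n PA b) ≠ 0

/-- `C` is an `α`-revived cycle, viewed inside the extended quiver. -/
def IsRevE {h : Q.V} (C : (Qe Q t pM).Path h h) : Prop :=
  ∃ C₀ : Q.Path h h, C = embed Q t pM C₀ ∧ IsRev K Q n PA αm C₀

/-- `C` is an elementary cycle of weight `wt`. -/
def IsElemW {h : Q.V} (C : (Qe Q t pM).Path h h) (wt : K) : Prop :=
  ∃ (m : Fin t) (δ₂ : Q.Path h (pM m).2.1) (δ₁ : Q.Path (pM m).1 h),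
    C = (embed Q t pM δ₂).comp (QD.Path.cons (yArr Q t pM m) (embed Q t pM δ₁)) ∧
    coordP K Q n PA basA (pM m) (cls K Q n PA (δ₁.comp δ₂)) = wt ∧ wt ≠ 0

/-- `C` is an elementary cycle. -/
def IsElem {h : Q.V} (C : (Qe Q t pM).Path h h) : Prop :=
  ∃ wt : K, IsElemW K Q n PA basA t pM C wt

/-- `C` is a nonzero cycle (elementary or `α`-revived) with weight `wt`. -/
def HasWt {h : Q.V} (C : (Qe Q t pM).Path h h) (wt : K) : Prop :=
  IsElemW K Q n PA basA t pM C wt ∨ (IsRevE K Q n PA αm t pM C ∧ wt = k)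

/-- The left action of `A` on `D(A) = Hom_K(A, K)`: `(a · f)(z) = f(z * a)`. -/
def dL (a : TA K Q n PA) (f : Module.Dual K (TA K Q n PA)) : Module.Dual K (TA K Q n PA) :=
  f ∘ₗ LinearMap.mulRight K a

/-- The right action of `A` on `D(A) = Hom_K(A, K)`: `(f · b)(z) = f(b * z)`. -/
def dR (f : Module.Dual K (TA K Q n PA)) (b : TA K Q n PA) : Module.Dual K (TA K Q n PA) :=
  f ∘ₗ LinearMap.mulLeft K b

variable (T : Type) [Ring T] [Algebra K T]
variable (eT : T ≃ₗ[K] TA K Q n PA × Module.Dual K (TA K Q n PA))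
variable (PB : PathAlg K (Qe Q t pM))
variable (Φm : PB.P →ₐ[K] T)

/-- `φ₁ = π₁ ∘ Φ`. -/
def ph1 (z : PB.P) : TA K Q n PA := (eT (Φm z)).1

/-- `φ₂ = π₂ ∘ Φ`. -/
def ph2 (z : PB.P) : Module.Dual K (TA K Q n PA) := (eT (Φm z)).2

/-- The primitive idempotent of `T` corresponding to a vertex. -/
def eV (i : Q.V) : T := eT.symm (cls K Q n PA (QD.Path.nil i), 0)

end Main

section Extra

variable (K : Type) [Field K] (Q : QD) [Fintype Q.V] [∀ i j : Q.V, Fintype (Q.Ar i j)]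
variable (n : ℕ) (PA : PathAlg K Q)
variable (t : ℕ) (pM : Fin t → QD.PathIn Q)
variable (T : Type) [Ring T] [Algebra K T]
variable (PB : PathAlg K (Qe Q t pM))
variable (Φm : PB.P →ₐ[K] T)

/-- The Jacobson radical of a ring. -/
def JT : Ideal T := Ideal.jacobson ⊥

/-- The Jacobson radical, viewed as a `K`-subspace. -/
def JTK : Submodule K T := Submodule.restrictScalars K (JT T)

/-- The square of the Jacobson radical, as a `K`-subspace. -/
def J2K : Submodule K T := JTK K T * JTK K T

/-- The number of arrows `i → j` in the Gabriel (ordinary) quiver of `T`,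
i.e. `dim_K e_i (rad T / rad² T) e_j`. -/
def gabrielCount (ei ej : T) : ℕ :=
  Module.finrank K
      ↥(Submodule.span K {y : T | ∃ z ∈ JT T, y = ei * z * ej} ⊔ J2K K T)
    - Module.finrank K ↥(J2K K T)

/-- `e` is a primitive idempotent. -/
def IsPrimIdem (e : T) : Prop :=
  e * e = e ∧ e ≠ 0 ∧
  ∀ f g : T, f * f = f → g * g = g → f * g = 0 → g * f = 0 → e = f + g → f = 0 ∨ g = 0

/-- `a` is an arrow of the ring `T` in the sense of Brenner:
`a ∈ rad T \ rad² T` and `a = x a y` for primitive idempotents `x, y`. -/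
def IsArrowT (a : T) : Prop :=
  a ∈ JT T ∧ a ∉ J2K K T ∧
  ∃ e f : T, IsPrimIdem T e ∧ IsPrimIdem T f ∧ a = e * a * f

/-- `rad (T e)`, a left submodule. -/
def radLe (e : T) : Submodule T T := Submodule.span T ((fun z => z * e) '' (JT T : Set T))

/-- `rad (e T)`, a right submodule. -/
def radRe (e : T) : Submodule Tᵐᵒᵖ T := Submodule.span Tᵐᵒᵖ ((fun z => e * z) '' (JT T : Set T))

/-- `Λ` is a complete set of arrows for `rad (T e)`. -/
def CompleteL (e : T) (Λ : Set T) : Prop :=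
  (∀ a ∈ Λ, IsArrowT K T a) ∧ Submodule.span T Λ = radLe T e ∧
  ∀ Λ' ⊂ Λ, Submodule.span T Λ' ≠ radLe T e

/-- `Γ` is a complete set of arrows for `rad (e T)`. -/
def CompleteR (e : T) (Γ : Set T) : Prop :=
  (∀ a ∈ Γ, IsArrowT K T a) ∧ Submodule.span Tᵐᵒᵖ Γ = radRe T e ∧
  ∀ Γ' ⊂ Γ, Submodule.span Tᵐᵒᵖ Γ' ≠ radRe T e

/-- `(N, nn) ∈ 𝒩` in the sense of Brenner, for the primitive idempotent `e`. -/
def mcN (e : T) (N nn : ℕ) : Prop :=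
  ∃ Λ Γ : Fin (nn + 1) → Set T,
    (∀ i : Fin (nn + 1), (i : ℕ) ≠ 0 → (Λ i).Nonempty ∧ (Γ i).Nonempty) ∧
    (∀ i j : Fin (nn + 1), i ≠ j → Λ i ∩ Λ j = ∅ ∧ Γ i ∩ Γ j = ∅) ∧
    CompleteL K T e (⋃ i, Λ i) ∧ CompleteR K T e (⋃ i, Γ i) ∧
    (∀ i j : Fin (nn + 1), (i ≠ j ∨ (i : ℕ) = 0 ∨ (j : ℕ) = 0) →
      ∀ a ∈ Λ i, ∀ b ∈ Γ j, a * b = 0) ∧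
    N = nn + (Λ 0).ncard

/-- The set `𝒞_h` of oriented cycles at `h` of the extended quiver that are
nonzero in the Hochschild extension algebra. -/
def Ch (h : Q.V) : Type :=
  {C : (Qe Q t pM).Path h h // 0 < C.length ∧ Φm (PB.ι C) ≠ 0}

/-- The relation `ℛ` on `𝒞_h`: the two cycles share an arrow which starts or ends at `h`. -/
def Rc (h : Q.V) (C C' : Ch K Q t pM T PB Φm h) : Prop :=
  ∃ (u v : Q.V) (a : (Qe Q t pM).Ar u v), (u = h ∨ v = h) ∧
    QD.Path.arrowMem a C.1 ∧ QD.Path.arrowMem a C'.1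

/-- `card (𝒞_h / ≡)`, the number of equivalence classes of `𝒞_h` under the equivalence
relation generated by `ℛ`. -/
def NCh (h : Q.V) : ℕ := Nat.card (Quot (Rc K Q t pM T PB Φm h))

/-- The set `𝒜_h` of arrows of the extended quiver ending at `h`. -/
def Ah (h : Q.V) : Type := Σ u : Q.V, (Qe Q t pM).Ar u h

/-- The relation `ℛ'` on `𝒜_h`: there is an arrow `b` with `ab ≠ 0 ≠ a'b` in `T_α(A)`. -/
def Ra (h : Q.V) (a a' : Ah Q t pM h) : Prop :=
  ∃ (v : Q.V) (b : (Qe Q t pM).Ar h v),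
    Φm (PB.ι (QD.Path.cons a.2 (QD.Path.cons b (QD.Path.nil (Q := Qe Q t pM) v)))) ≠ 0 ∧
    Φm (PB.ι (QD.Path.cons a'.2 (QD.Path.cons b (QD.Path.nil (Q := Qe Q t pM) v)))) ≠ 0

/-- `card (𝒜_h / ≈)`. -/
def NAh (h : Q.V) : ℕ := Nat.card (Quot (Ra K Q t pM T PB Φm h))

end Extra

/-- An `R`-module is indecomposable if it is nonzero and is not the internal direct
sum of two nonzero submodules. -/
def Indec (R M : Type) [Ring R] [AddCommGroup M] [Module R M] : Prop :=
  (⊥ : Submodule R M) ≠ ⊤ ∧ ∀ p q : Submodule R M, IsCompl p q → p = ⊥ ∨ q = ⊥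


section Aux9

/-- A single-arrow path. -/
def sg {Q : QD} {i j : Q.V} (a : Q.Ar i j) : Q.Path i j := QD.Path.cons a (QD.Path.nil j)

lemma plen_nil {Q : QD} (i : Q.V) : (QD.Path.nil i).length = 0 := rfl

lemma plen_cons {Q : QD} {i j l : Q.V} (a : Q.Ar i j) (p : Q.Path j l) :
    (QD.Path.cons a p).length = p.length + 1 := rfl

lemma pnil_comp {Q : QD} {i j : Q.V} (p : Q.Path i j) :
    (QD.Path.nil i).comp p = p := rfl

lemma pcomp_nil {Q : QD} {i j : Q.V} (p : Q.Path i j) :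
    p.comp (QD.Path.nil j) = p := by
  induction p with
  | nil => rfl
  | cons a p ih => exact congrArg (QD.Path.cons a) ih

lemma pcomp_cons {Q : QD} {i j l m : Q.V} (a : Q.Ar i j) (p : Q.Path j l) (q : Q.Path l m) :
    (QD.Path.cons a p).comp q = QD.Path.cons a (p.comp q) := rfl

lemma pcomp_assoc {Q : QD} :
    ∀ {i j l m : Q.V} (p : Q.Path i j) (q : Q.Path j l) (r : Q.Path l m),
    (p.comp q).comp r = p.comp (q.comp r)
  | _, _, _, _, .nil _, _, _ => rfl
  | _, _, _, _, .cons a p, q, r => congrArg (QD.Path.cons a) (pcomp_assoc p q r)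

lemma plen_comp {Q : QD} :
    ∀ {i j l : Q.V} (p : Q.Path i j) (q : Q.Path j l),
    (p.comp q).length = p.length + q.length
  | _, _, _, .nil _, q => (Nat.zero_add _).symm
  | _, _, _, .cons a p, q => by
      show (p.comp q).length + 1 = (p.length + 1) + q.length
      rw [plen_comp p q]; omega

lemma embed_comp' {Q : QD} (t : ℕ) (pM : Fin t → QD.PathIn Q) :
    ∀ {i j l : Q.V} (p : Q.Path i j) (q : Q.Path j l),
    embed Q t pM (p.comp q) = (embed Q t pM p).comp (embed Q t pM q)
  | _, _, _, .nil _, _ => rfl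
  | _, _, _, .cons a p, q => by
      show QD.Path.cons (Sum.inl a) (embed Q t pM (p.comp q))
        = QD.Path.cons (Sum.inl a) ((embed Q t pM p).comp (embed Q t pM q))
      exact congrArg _ (embed_comp' t pM p q)

lemma numY_nil {Q : QD} (t : ℕ) (pM : Fin t → QD.PathIn Q) (i : Q.V) :
    numY Q t pM (QD.Path.nil (Q := Qe Q t pM) i) = 0 := rfl

lemma numY_cons_inl {Q : QD} (t : ℕ) (pM : Fin t → QD.PathIn Q) {i j l : Q.V}
    (a : Q.Ar i j) (p : (Qe Q t pM).Path j l) :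
    numY Q t pM (QD.Path.cons (Sum.inl a : (Qe Q t pM).Ar i j) p) = numY Q t pM p :=
  Nat.zero_add _

lemma numY_cons_inr {Q : QD} (t : ℕ) (pM : Fin t → QD.PathIn Q) {i j l : Q.V}
    (m : {m : Fin t // (pM m).2.1 = i ∧ (pM m).1 = j}) (p : (Qe Q t pM).Path j l) :
    numY Q t pM (QD.Path.cons (Sum.inr m : (Qe Q t pM).Ar i j) p) = numY Q t pM p + 1 := by
  show 1 + numY Q t pM p = numY Q t pM p + 1
  omega

lemma numY_embed {Q : QD} (t : ℕ) (pM : Fin t → QD.PathIn Q) {i j : Q.V} (p : Q.Path i j) :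
    numY Q t pM (embed Q t pM p) = 0 := by
  induction p with
  | nil => rfl
  | cons a p ih => rw [show embed Q t pM (QD.Path.cons a p)
      = QD.Path.cons (Sum.inl a) (embed Q t pM p) from rfl, numY_cons_inl, ih]

lemma numY_comp {Q : QD} (t : ℕ) (pM : Fin t → QD.PathIn Q) :
    ∀ {i j l : Q.V} (p : (Qe Q t pM).Path i j) (q : (Qe Q t pM).Path j l),
    numY Q t pM (p.comp q) = numY Q t pM p + numY Q t pM q
  | _, _, _, .nil _, q => (Nat.zero_add _).symm
  | _, _, _, .cons a p, q => by
      rcases a with a₀ | m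
      · rw [pcomp_cons, numY_cons_inl, numY_cons_inl, numY_comp t pM p q]
      · rw [pcomp_cons, numY_cons_inr, numY_cons_inr, numY_comp t pM p q]; omega

lemma sig_len_eq {Q : QD} {p q : QD.PathIn Q} (h : p = q) :
    p.2.2.length = q.2.2.length := by rw [h]

lemma length_castP {Q : QD} {u a b : Q.V} (e : a = b) (h : Q.Path u a = Q.Path u b)
    (p : Q.Path u a) : (cast h p).length = p.length := by subst e; rfl

lemma seg_length (Q : QD) (s : ℕ) [NeZero s] (w : ZMod s → Q.V)
    (x : ∀ i : ZMod s, Q.Ar (w i) (w (i + 1))) :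
    ∀ (m : ℕ) (i : ZMod s), (seg Q s w x i m).length = m
  | 0, i => by
      have pf : (i : ZMod s) = i + ((0 : ℕ) : ZMod s) := by push_cast; ring
      rw [seg, length_castP (congrArg w pf)]
      rfl
  | m + 1, i => by
      have pf : (i : ZMod s) + 1 + ((m : ℕ) : ZMod s) = i + (((m + 1 : ℕ)) : ZMod s) := by
        push_cast; ring
      rw [seg, length_castP (congrArg w pf), plen_cons, seg_length Q s w x m (i + 1)]

variable (K : Type) [Field K] (Q : QD) [Fintype Q.V] [∀ i j : Q.V, Fintype (Q.Ar i j)]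
variable (n : ℕ) (PA : PathAlg K Q)
variable (basA : Module.Basis (Short Q n) K (TA K Q n PA))
variable (s : ℕ) [NeZero s] (w : ZMod s → Q.V) (x : ∀ i : ZMod s, Q.Ar (w i) (w (i + 1)))
variable (k : K)
variable (αm : TA K Q n PA →ₗ[K] TA K Q n PA →ₗ[K] Module.Dual K (TA K Q n PA))
variable (t : ℕ) (pM : Fin t → QD.PathIn Q)
variable (T : Type) [Ring T] [Algebra K T]
variable (eT : T ≃ₗ[K] TA K Q n PA × Module.Dual K (TA K Q n PA))
variable (PB : PathAlg K (Qe Q t pM))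
variable (Φm : PB.P →ₐ[K] T)

lemma cls_long {i j : Q.V} (p : Q.Path i j) (hp : n ≤ p.length) :
    cls K Q n PA p = 0 := by
  have hrel : truncRel K Q n PA (PA.ι p) 0 := ⟨rfl, ⟨⟨i, j, p⟩, hp, rfl⟩⟩
  calc cls K Q n PA p = RingQuot.mkAlgHom K (truncRel K Q n PA) 0 :=
        RingQuot.mkAlgHom_rel K hrel
    _ = 0 := map_zero _

lemma cls_mul {i j l : Q.V} (p : Q.Path i j) (q : Q.Path j l) :
    cls K Q n PA p * cls K Q n PA q = cls K Q n PA (p.comp q) := by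
  unfold cls; rw [PA.ι_comp, map_mul]

lemma cls_ortho {i j l m : Q.V} (p : Q.Path i j) (q : Q.Path l m) (h : j ≠ l) :
    cls K Q n PA p * cls K Q n PA q = 0 := by
  unfold cls; rw [← map_mul, PA.ι_ortho p q h, map_zero]

variable {K Q n PA} in
lemma cls_short (hbas : ∀ sp : Short Q n, basA sp = cls K Q n PA sp.1.2.2)
    {i j : Q.V} (p : Q.Path i j) (hp : p.length < n) :
    cls K Q n PA p = basA ⟨⟨i, j, p⟩, hp⟩ := (hbas ⟨⟨i, j, p⟩, hp⟩).symm

variable {K Q n PA} in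
lemma cls_short_ne (hbas : ∀ sp : Short Q n, basA sp = cls K Q n PA sp.1.2.2)
    {i j : Q.V} (p : Q.Path i j) (hp : p.length < n) :
    cls K Q n PA p ≠ 0 := by
  rw [cls_short basA hbas p hp]; exact basA.ne_zero _

variable {K Q n PA} in
lemma coordP_cls (hbas : ∀ sp : Short Q n, basA sp = cls K Q n PA sp.1.2.2)
    {qi qj : Q.V} (p : QD.PathIn Q) (q : Q.Path qi qj) :
    coordP K Q n PA basA p (cls K Q n PA q)
      = if q.length < n ∧ q.sig = p then 1 else 0 := by
  by_cases hp : p.2.2.length < n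
  · unfold coordP
    rw [dif_pos hp]
    by_cases hq : q.length < n
    · rw [cls_short basA hbas q hq, Module.Basis.coord_apply, Module.Basis.repr_self,
        Finsupp.single_apply]
      by_cases hqp : q.sig = p
      · rw [if_pos (Subtype.ext hqp), if_pos ⟨hq, hqp⟩]
      · rw [if_neg (fun hc => hqp (Subtype.ext_iff.mp hc)),
          if_neg (fun hc => hqp hc.2)]
    · rw [cls_long K Q n PA q (Nat.le_of_not_lt hq), map_zero,
        if_neg (fun hc => hq hc.1)]
  · unfold coordP
    rw [dif_neg hp, LinearMap.zero_apply,
      if_neg (fun hc => hp (by rw [← hc.2]; exact hc.1))]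

lemma dL_apply (a : TA K Q n PA) (f : Module.Dual K (TA K Q n PA)) (z : TA K Q n PA) :
    dL K Q n PA a f z = f (z * a) := rfl

lemma dR_apply (f : Module.Dual K (TA K Q n PA)) (b z : TA K Q n PA) :
    dR K Q n PA f b z = f (b * z) := rfl

lemma dL_zero_right (a : TA K Q n PA) : dL K Q n PA a 0 = 0 := LinearMap.zero_comp _

lemma dR_zero_left (b : TA K Q n PA) : dR K Q n PA 0 b = 0 := LinearMap.zero_comp _

lemma dL_zero_left (f : Module.Dual K (TA K Q n PA)) : dL K Q n PA 0 f = 0 := by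
  ext z; show f (z * 0) = 0; rw [mul_zero, map_zero]

lemma dR_zero_right (f : Module.Dual K (TA K Q n PA)) : dR K Q n PA f 0 = 0 := by
  ext z; show f (0 * z) = 0; rw [zero_mul, map_zero]

variable {K Q n PA s w x} in
lemma aTerm_short (hs1 : n + 1 ≤ s) {i j l : Q.V} (a : Q.Path i j) (b : Q.Path j l)
    (h : (a.comp b).length < n) (r : ZMod s) :
    aTerm K Q n PA basA s w x a b r = 0 := by
  unfold aTerm
  split_ifs with hc1 hc2
  · exact absurd hc1.2.2.1 (by omega)
  · exact absurd hc2.2.2.1 (by omega)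
  · rfl

variable {K Q n PA s w x k αm} in
lemma alpha_short
    (hα : ∀ {i j l : Q.V} (a : Q.Path i j) (b : Q.Path j l),
      αm (cls K Q n PA a) (cls K Q n PA b) =
        k • ∑ r : ZMod s, aTerm K Q n PA basA s w x a b r)
    (hs1 : n + 1 ≤ s) {i j l : Q.V} (a : Q.Path i j) (b : Q.Path j l)
    (h : (a.comp b).length < n) :
    αm (cls K Q n PA a) (cls K Q n PA b) = 0 := by
  rw [hα a b, Finset.sum_eq_zero (fun r _ => aTerm_short basA hs1 a b h r), smul_zero]

variable {K Q n PA s w x k αm} in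
lemma van (hn : 2 ≤ n) (hs1 : n + 1 ≤ s) (hs2 : s ≤ 2 * n - 2)
    (hbas : ∀ sp : Short Q n, basA sp = cls K Q n PA sp.1.2.2)
    (hα : ∀ {i j l : Q.V} (a : Q.Path i j) (b : Q.Path j l),
      αm (cls K Q n PA a) (cls K Q n PA b) =
        k • ∑ r : ZMod s, aTerm K Q n PA basA s w x a b r)
    {h₁ h₂ h₃ h₄ : Q.V} (p₁ : Q.Path h₁ h₂) (p₂ : Q.Path h₂ h₃) (bb : Q.Path h₃ h₄)
    (hbb : n - 1 ≤ bb.length) :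
    dR K Q n PA (αm (cls K Q n PA p₁) (cls K Q n PA p₂)) (cls K Q n PA bb) = 0 := by
  refine basA.ext fun sp => ?_
  obtain ⟨⟨a₀, b₀, ζ⟩, hζ⟩ := sp
  rw [LinearMap.zero_apply, hbas ⟨⟨a₀, b₀, ζ⟩, hζ⟩, dR_apply]
  by_cases hv : h₄ = a₀
  · subst hv
    rw [cls_mul, hα p₁ p₂, LinearMap.smul_apply, LinearMap.sum_apply,
      Finset.sum_eq_zero, smul_zero]
    intro r _
    unfold aTerm
    split_ifs with hc1 hc2
    · rw [coordP_cls basA hbas]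
      rw [if_neg]
      rintro ⟨hlen, hsig⟩
      have e1 := sig_len_eq hsig
      have e2 := seg_length Q s w x (s - (p₁.comp p₂).length)
        (↑r + ((p₁.comp p₂).length : ZMod s))
      have e3 := plen_comp bb ζ
      have e4 : n ≤ (p₁.comp p₂).length := hc1.2.2.1
      have e5 : (p₁.comp p₂).length < s := hc1.2.2.2.1
      simp only [QD.Path.sig] at e1
      omega
    · rw [coordP_cls basA hbas]
      rw [if_neg]
      rintro ⟨hlen, hsig⟩
      have e1 := sig_len_eq hsig
      have e3 := plen_comp bb ζ
      simp only [QD.Path.sig] at e1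
      have : (QD.Path.nil (w ↑r)).length = 0 := rfl
      omega
    · rfl
  · rw [cls_ortho K Q n PA bb ζ hv, map_zero]

/-- The `D(A)`-component of `Φ` on an embedded path. -/
def Gf : {i j : Q.V} → Q.Path i j → Module.Dual K (TA K Q n PA)
  | _, _, QD.Path.nil _ => 0
  | _, _, QD.Path.cons a p =>
      dL K Q n PA (cls K Q n PA (sg a)) (Gf p) +
        αm (cls K Q n PA (sg a)) (cls K Q n PA p)

lemma Gf_nil (i : Q.V) : Gf K Q n PA αm (QD.Path.nil i) = 0 := rfl

lemma Gf_cons {i j l : Q.V} (a : Q.Ar i j) (p : Q.Path j l) :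
    Gf K Q n PA αm (QD.Path.cons a p)
      = dL K Q n PA (cls K Q n PA (sg a)) (Gf K Q n PA αm p) +
          αm (cls K Q n PA (sg a)) (cls K Q n PA p) := rfl

variable {K Q n PA s w x k αm} in
lemma Gf_short
    (hα : ∀ {i j l : Q.V} (a : Q.Path i j) (b : Q.Path j l),
      αm (cls K Q n PA a) (cls K Q n PA b) =
        k • ∑ r : ZMod s, aTerm K Q n PA basA s w x a b r)
    (hs1 : n + 1 ≤ s) {i j : Q.V} (δ : Q.Path i j) (h : δ.length < n) :
    Gf K Q n PA αm δ = 0 := by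
  induction δ with
  | nil => rfl
  | cons a p ih =>
    rw [plen_cons] at h
    rw [Gf_cons, ih (by omega), dL_zero_right, zero_add]
    exact alpha_short basA hα hs1 (sg a) p
      (by rw [plen_comp]; show 1 + p.length < n; omega)

variable {K Q n PA s w x k αm} in
lemma Gf_long (hn : 2 ≤ n) (hs1 : n + 1 ≤ s) (hs2 : s ≤ 2 * n - 2)
    (hbas : ∀ sp : Short Q n, basA sp = cls K Q n PA sp.1.2.2)
    (hα : ∀ {i j l : Q.V} (a : Q.Path i j) (b : Q.Path j l),
      αm (cls K Q n PA a) (cls K Q n PA b) =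
        k • ∑ r : ZMod s, aTerm K Q n PA basA s w x a b r)
    (hcoc : ∀ a b c : TA K Q n PA,
      dL K Q n PA a (αm b c) + αm a (b * c) = αm (a * b) c + dR K Q n PA (αm a b) c)
    {i j : Q.V} (δ : Q.Path i j) (hδ : n ≤ δ.length) :
    ∃ (v : Q.V) (aa : Q.Path i v) (bb : Q.Path v j),
      δ = aa.comp bb ∧ 0 < aa.length ∧ bb.length = n - 1 ∧
      Gf K Q n PA αm δ = αm (cls K Q n PA aa) (cls K Q n PA bb) := by
  induction δ with
  | nil => exact absurd hδ (by rw [plen_nil]; omega)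
  | cons a p ih =>
    rw [plen_cons] at hδ
    rcases Nat.lt_or_ge p.length n with hlt | hge
    · have hpl : p.length = n - 1 := by omega
      refine ⟨_, sg a, p, rfl, by rw [show (sg a).length = 1 from rfl]; omega, hpl, ?_⟩
      rw [Gf_cons, Gf_short basA hα hs1 p hlt, dL_zero_right, zero_add]
    · obtain ⟨v, aa, bb, heq, h0, hbl, hG⟩ := ih hge
      refine ⟨v, QD.Path.cons a aa, bb, ?_, by rw [plen_cons]; omega, hbl, ?_⟩
      · rw [heq, ← pcomp_cons]
      · have hz : cls K Q n PA p = 0 := cls_long K Q n PA p hge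
        have h5 : cls K Q n PA aa * cls K Q n PA bb = 0 := by
          rw [cls_mul, ← heq]; exact hz
        have h6 : dR K Q n PA (αm (cls K Q n PA (sg a)) (cls K Q n PA aa))
            (cls K Q n PA bb) = 0 :=
          van basA hn hs1 hs2 hbas hα (sg a) aa bb (by omega)
        have hcoceq := hcoc (cls K Q n PA (sg a)) (cls K Q n PA aa) (cls K Q n PA bb)
        rw [h5, h6, add_zero, map_zero, add_zero] at hcoceq
        rw [Gf_cons, hG, hz, map_zero, add_zero, hcoceq, cls_mul]
        rfl

variable {K Q t pM} in
lemma numY_zero :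
    ∀ {i j : Q.V} (P : (Qe Q t pM).Path i j), numY Q t pM P = 0 →
      ∃ δ : Q.Path i j, P = embed Q t pM δ
  | _, _, .nil i, _ => ⟨QD.Path.nil (Q := Q) i, rfl⟩
  | _, _, .cons a q, h => by
      rcases a with a₀ | m
      · rw [numY_cons_inl] at h
        obtain ⟨δ, rfl⟩ := numY_zero q h
        exact ⟨QD.Path.cons a₀ δ, rfl⟩
      · rw [numY_cons_inr] at h
        omega

variable {K Q t pM} in
lemma numY_one :
    ∀ {i j : Q.V} (P : (Qe Q t pM).Path i j), numY Q t pM P = 1 →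
      ∃ (m : Fin t) (δ₂ : Q.Path i (pM m).2.1) (δ₁ : Q.Path (pM m).1 j),
      P = (embed Q t pM δ₂).comp (QD.Path.cons (yArr Q t pM m) (embed Q t pM δ₁))
  | _, _, .nil i, h => absurd h (by rw [numY_nil]; omega)
  | _, _, .cons a q, h => by
      rcases a with a₀ | ⟨m, rfl, rfl⟩
      · rw [numY_cons_inl] at h
        obtain ⟨m, δ₂, δ₁, rfl⟩ := numY_one q h
        exact ⟨m, QD.Path.cons a₀ δ₂, δ₁, rfl⟩
      · rw [numY_cons_inr] at h
        obtain ⟨δ₁, rfl⟩ := numY_zero q (by omega)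
        exact ⟨m, QD.Path.nil _, δ₁, rfl⟩

variable {K Q n PA αm t pM T eT PB Φm} in
lemma Fm_comp
    (hTmul : ∀ u v : T, eT (u * v) = ((eT u).1 * (eT v).1,
      dL K Q n PA (eT u).1 (eT v).2 + dR K Q n PA (eT u).2 (eT v).1 + αm (eT u).1 (eT v).1))
    {i j l : Q.V} (p : (Qe Q t pM).Path i j) (q : (Qe Q t pM).Path j l) :
    eT (Φm (PB.ι (p.comp q)))
      = ((eT (Φm (PB.ι p))).1 * (eT (Φm (PB.ι q))).1,
          dL K Q n PA (eT (Φm (PB.ι p))).1 (eT (Φm (PB.ι q))).2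
            + dR K Q n PA (eT (Φm (PB.ι p))).2 (eT (Φm (PB.ι q))).1
            + αm (eT (Φm (PB.ι p))).1 (eT (Φm (PB.ι q))).1) := by
  rw [PB.ι_comp, map_mul, hTmul]

variable {K Q n PA t pM T eT PB Φm} in
lemma Fm_nil
    (hΦnil : ∀ i : Q.V, Φm (PB.ι (QD.Path.nil (Q := Qe Q t pM) i))
      = eT.symm (cls K Q n PA (QD.Path.nil i), 0)) (i : Q.V) :
    eT (Φm (PB.ι (QD.Path.nil (Q := Qe Q t pM) i))) = (cls K Q n PA (QD.Path.nil i), 0) := by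
  rw [hΦnil, LinearEquiv.apply_symm_apply]

variable {K Q n PA t pM T eT PB Φm} in
lemma Fm_arr
    (hΦarr : ∀ {i j : Q.V} (a : Q.Ar i j),
      Φm (PB.ι (QD.Path.cons (Sum.inl a) (QD.Path.nil (Q := Qe Q t pM) j)))
      = eT.symm (cls K Q n PA (QD.Path.cons a (QD.Path.nil j)), 0))
    {i j : Q.V} (a : Q.Ar i j) :
    eT (Φm (PB.ι (sg (Sum.inl a : (Qe Q t pM).Ar i j)))) = (cls K Q n PA (sg a), 0) := by
  rw [show sg (Sum.inl a : (Qe Q t pM).Ar i j)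
      = QD.Path.cons (Sum.inl a) (QD.Path.nil (Q := Qe Q t pM) j) from rfl,
    hΦarr, LinearEquiv.apply_symm_apply]
  rfl

variable {K Q n PA basA t pM T eT PB Φm} in
lemma Fm_y
    (hΦy : ∀ m : Fin t,
      Φm (PB.ι (QD.Path.cons (yArr Q t pM m) (QD.Path.nil (Q := Qe Q t pM) (pM m).1)))
      = eT.symm (0, coordP K Q n PA basA (pM m))) (m : Fin t) :
    eT (Φm (PB.ι (sg (yArr Q t pM m)))) = (0, coordP K Q n PA basA (pM m)) := by
  rw [show sg (yArr Q t pM m)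
      = QD.Path.cons (yArr Q t pM m) (QD.Path.nil (Q := Qe Q t pM) (pM m).1) from rfl,
    hΦy, LinearEquiv.apply_symm_apply]

variable {K Q n PA αm t pM T eT PB Φm} in
lemma Fm_embed
    (hTmul : ∀ u v : T, eT (u * v) = ((eT u).1 * (eT v).1,
      dL K Q n PA (eT u).1 (eT v).2 + dR K Q n PA (eT u).2 (eT v).1 + αm (eT u).1 (eT v).1))
    (hΦnil : ∀ i : Q.V, Φm (PB.ι (QD.Path.nil (Q := Qe Q t pM) i))
      = eT.symm (cls K Q n PA (QD.Path.nil i), 0))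
    (hΦarr : ∀ {i j : Q.V} (a : Q.Ar i j),
      Φm (PB.ι (QD.Path.cons (Sum.inl a) (QD.Path.nil (Q := Qe Q t pM) j)))
      = eT.symm (cls K Q n PA (QD.Path.cons a (QD.Path.nil j)), 0)) :
    ∀ {i j : Q.V} (δ : Q.Path i j),
      eT (Φm (PB.ι (embed Q t pM δ))) = (cls K Q n PA δ, Gf K Q n PA αm δ)
  | _, _, .nil i => by
      rw [show embed Q t pM (QD.Path.nil i) = QD.Path.nil (Q := Qe Q t pM) i from rfl,
        Fm_nil hΦnil]
      rfl
  | _, _, .cons a p => by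
      rw [show embed Q t pM (QD.Path.cons a p)
          = (sg (Sum.inl a : (Qe Q t pM).Ar _ _)).comp (embed Q t pM p) from rfl,
        Fm_comp hTmul, Fm_arr hΦarr, Fm_embed hTmul hΦnil hΦarr p]
      show (cls K Q n PA (sg a) * cls K Q n PA p,
        dL K Q n PA (cls K Q n PA (sg a)) (Gf K Q n PA αm p)
          + dR K Q n PA 0 (cls K Q n PA p)
          + αm (cls K Q n PA (sg a)) (cls K Q n PA p)) = _
      rw [dR_zero_left, add_zero, cls_mul]
      rfl

variable {K Q n PA basA αm t pM T eT PB Φm} in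
lemma Fm_elem
    (hTmul : ∀ u v : T, eT (u * v) = ((eT u).1 * (eT v).1,
      dL K Q n PA (eT u).1 (eT v).2 + dR K Q n PA (eT u).2 (eT v).1 + αm (eT u).1 (eT v).1))
    (hΦnil : ∀ i : Q.V, Φm (PB.ι (QD.Path.nil (Q := Qe Q t pM) i))
      = eT.symm (cls K Q n PA (QD.Path.nil i), 0))
    (hΦarr : ∀ {i j : Q.V} (a : Q.Ar i j),
      Φm (PB.ι (QD.Path.cons (Sum.inl a) (QD.Path.nil (Q := Qe Q t pM) j)))
      = eT.symm (cls K Q n PA (QD.Path.cons a (QD.Path.nil j)), 0))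
    (hΦy : ∀ m : Fin t,
      Φm (PB.ι (QD.Path.cons (yArr Q t pM m) (QD.Path.nil (Q := Qe Q t pM) (pM m).1)))
      = eT.symm (0, coordP K Q n PA basA (pM m)))
    (m : Fin t) {h h' : Q.V} (δ₂ : Q.Path h (pM m).2.1) (δ₁ : Q.Path (pM m).1 h') :
    eT (Φm (PB.ι ((embed Q t pM δ₂).comp
        (QD.Path.cons (yArr Q t pM m) (embed Q t pM δ₁)))))
      = (0, dL K Q n PA (cls K Q n PA δ₂)
          (dR K Q n PA (coordP K Q n PA basA (pM m)) (cls K Q n PA δ₁))) := by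
  rw [show QD.Path.cons (yArr Q t pM m) (embed Q t pM δ₁)
      = (sg (yArr Q t pM m)).comp (embed Q t pM δ₁) from rfl]
  rw [Fm_comp hTmul (embed Q t pM δ₂) ((sg (yArr Q t pM m)).comp (embed Q t pM δ₁)),
    Fm_comp hTmul (sg (yArr Q t pM m)) (embed Q t pM δ₁),
    Fm_y hΦy m, Fm_embed hTmul hΦnil hΦarr δ₁, Fm_embed hTmul hΦnil hΦarr δ₂]
  show (cls K Q n PA δ₂ * ((0 : TA K Q n PA) * cls K Q n PA δ₁),
      dL K Q n PA (cls K Q n PA δ₂)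
          (dL K Q n PA 0 (Gf K Q n PA αm δ₁)
            + dR K Q n PA (coordP K Q n PA basA (pM m)) (cls K Q n PA δ₁)
            + αm 0 (cls K Q n PA δ₁))
        + dR K Q n PA (Gf K Q n PA αm δ₂) ((0 : TA K Q n PA) * cls K Q n PA δ₁)
        + αm (cls K Q n PA δ₂) ((0 : TA K Q n PA) * cls K Q n PA δ₁)) = _
  rw [zero_mul, mul_zero, dL_zero_left, map_zero, LinearMap.zero_apply, zero_add, add_zero,
    dR_zero_right, add_zero, map_zero, add_zero]

variable {K Q n PA basA t pM T eT PB Φm} in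
lemma Fm_y'
    (hΦy : ∀ m : Fin t,
      Φm (PB.ι (QD.Path.cons (yArr Q t pM m) (QD.Path.nil (Q := Qe Q t pM) (pM m).1)))
      = eT.symm (0, coordP K Q n PA basA (pM m)))
    {i j : Q.V} (m : Fin t) (hm1 : (pM m).2.1 = i) (hm2 : (pM m).1 = j) :
    eT (Φm (PB.ι (sg (Sum.inr ⟨m, hm1, hm2⟩ : (Qe Q t pM).Ar i j))))
      = (0, coordP K Q n PA basA (pM m)) := by
  subst hm1; subst hm2
  exact Fm_y hΦy m

variable {K Q n PA basA αm t pM T eT PB Φm} in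
lemma Y_one
    (hTmul : ∀ u v : T, eT (u * v) = ((eT u).1 * (eT v).1,
      dL K Q n PA (eT u).1 (eT v).2 + dR K Q n PA (eT u).2 (eT v).1 + αm (eT u).1 (eT v).1))
    (hΦarr : ∀ {i j : Q.V} (a : Q.Ar i j),
      Φm (PB.ι (QD.Path.cons (Sum.inl a) (QD.Path.nil (Q := Qe Q t pM) j)))
      = eT.symm (cls K Q n PA (QD.Path.cons a (QD.Path.nil j)), 0))
    (hΦy : ∀ m : Fin t,
      Φm (PB.ι (QD.Path.cons (yArr Q t pM m) (QD.Path.nil (Q := Qe Q t pM) (pM m).1)))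
      = eT.symm (0, coordP K Q n PA basA (pM m))) :
    ∀ {i j : Q.V} (P : (Qe Q t pM).Path i j), 1 ≤ numY Q t pM P →
      (eT (Φm (PB.ι P))).1 = 0
  | _, _, .nil i, hY => absurd hY (by rw [numY_nil]; omega)
  | _, _, .cons a q, hY => by
      rw [show QD.Path.cons a q = (sg a).comp q from rfl, Fm_comp hTmul]
      rcases a with a₀ | ⟨m, hm1, hm2⟩
      · rw [numY_cons_inl] at hY
        rw [Fm_arr hΦarr a₀]
        show cls K Q n PA (sg a₀) * (eT (Φm (PB.ι q))).1 = 0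
        rw [Y_one hTmul hΦarr hΦy q hY, mul_zero]
      · rw [Fm_y' hΦy m hm1 hm2]
        show (0 : TA K Q n PA) * (eT (Φm (PB.ι q))).1 = 0
        rw [zero_mul]

variable {K Q n PA basA αm t pM T eT PB Φm} in
lemma Y_two
    (hTmul : ∀ u v : T, eT (u * v) = ((eT u).1 * (eT v).1,
      dL K Q n PA (eT u).1 (eT v).2 + dR K Q n PA (eT u).2 (eT v).1 + αm (eT u).1 (eT v).1))
    (hΦarr : ∀ {i j : Q.V} (a : Q.Ar i j),
      Φm (PB.ι (QD.Path.cons (Sum.inl a) (QD.Path.nil (Q := Qe Q t pM) j)))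
      = eT.symm (cls K Q n PA (QD.Path.cons a (QD.Path.nil j)), 0))
    (hΦy : ∀ m : Fin t,
      Φm (PB.ι (QD.Path.cons (yArr Q t pM m) (QD.Path.nil (Q := Qe Q t pM) (pM m).1)))
      = eT.symm (0, coordP K Q n PA basA (pM m))) :
    ∀ {i j : Q.V} (P : (Qe Q t pM).Path i j), 2 ≤ numY Q t pM P →
      eT (Φm (PB.ι P)) = 0
  | _, _, .nil i, hY => absurd hY (by rw [numY_nil]; omega)
  | _, _, .cons a q, hY => by
      rw [show QD.Path.cons a q = (sg a).comp q from rfl, Fm_comp hTmul]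
      rcases a with a₀ | ⟨m, hm1, hm2⟩
      · rw [numY_cons_inl] at hY
        rw [Fm_arr hΦarr a₀, Y_two hTmul hΦarr hΦy q hY]
        show (cls K Q n PA (sg a₀) * 0,
          dL K Q n PA (cls K Q n PA (sg a₀)) 0 + dR K Q n PA 0 0
            + αm (cls K Q n PA (sg a₀)) 0) = 0
        rw [mul_zero, dL_zero_right, dR_zero_left, map_zero, add_zero, add_zero]
        rfl
      · rw [numY_cons_inr] at hY
        rw [Fm_y' hΦy m hm1 hm2, Y_one hTmul hΦarr hΦy q (by omega)]
        show ((0 : TA K Q n PA) * 0,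
          dL K Q n PA 0 (eT (Φm (PB.ι q))).2
            + dR K Q n PA (coordP K Q n PA basA (pM m)) 0
            + αm (0 : TA K Q n PA) 0) = 0
        rw [mul_zero, dL_zero_left, dR_zero_right, map_zero, add_zero, add_zero]
        rfl

variable {K Q n PA basA αm} in
lemma elem_iff
    (hcyc : ∀ (i : Q.V) (p : Q.Path i i), 0 < p.length → cls K Q n PA p = 0)
    (hbas : ∀ sp : Short Q n, basA sp = cls K Q n PA sp.1.2.2)
    (hMlt : ∀ m : Fin t, (pM m).2.2.length < n)
    (m : Fin t) {h : Q.V} (δ₂ : Q.Path h (pM m).2.1) (δ₁ : Q.Path (pM m).1 h) :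
    dL K Q n PA (cls K Q n PA δ₂)
        (dR K Q n PA (coordP K Q n PA basA (pM m)) (cls K Q n PA δ₁)) = 0
      ↔ ¬ ((δ₁.comp δ₂).sig = pM m) := by
  constructor
  · intro hz hsig
    have hev := LinearMap.congr_fun hz (cls K Q n PA (QD.Path.nil h))
    rw [dL_apply, dR_apply,
      show cls K Q n PA (QD.Path.nil h) * cls K Q n PA δ₂ = cls K Q n PA δ₂ from
        cls_mul K Q n PA (QD.Path.nil h) δ₂,
      cls_mul, coordP_cls basA hbas, LinearMap.zero_apply] at hev
    have hlen : (δ₁.comp δ₂).length < n := by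
      have := sig_len_eq hsig
      have h2 := hMlt m
      simp only [QD.Path.sig] at this
      omega
    rw [if_pos ⟨hlen, hsig⟩] at hev
    exact one_ne_zero hev
  · intro hsig
    refine basA.ext fun sp => ?_
    obtain ⟨⟨a₀, b₀, ζ⟩, hζ⟩ := sp
    rw [LinearMap.zero_apply, hbas ⟨⟨a₀, b₀, ζ⟩, hζ⟩, dL_apply, dR_apply]
    by_cases hb : b₀ = h
    · subst hb
      by_cases ha : a₀ = b₀
      · subst ha
        rcases Nat.eq_zero_or_pos ζ.length with hzl | hzl
        · cases ζ with
          | nil i =>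
            rw [show cls K Q n PA (QD.Path.nil a₀) * cls K Q n PA δ₂
                  = cls K Q n PA δ₂ from cls_mul K Q n PA (QD.Path.nil a₀) δ₂,
              cls_mul, coordP_cls basA hbas, if_neg (fun hc => hsig hc.2)]
          | cons b p => exact absurd hzl (by rw [plen_cons]; omega)
        · exact absurd (hcyc _ ζ hzl) (cls_short_ne basA hbas ζ hζ)
      · rw [cls_mul, cls_ortho K Q n PA δ₁ (ζ.comp δ₂) (fun e => ha e.symm), map_zero]
    · rw [cls_ortho K Q n PA ζ δ₂ hb, mul_zero, map_zero]

variable {K Q n PA basA s w x k αm t pM T eT PB Φm} in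
lemma cyc_zero
    (hn : 2 ≤ n) (hs1 : n + 1 ≤ s) (hs2 : s ≤ 2 * n - 2)
    (hcyc : ∀ (i : Q.V) (p : Q.Path i i), 0 < p.length → cls K Q n PA p = 0)
    (hbas : ∀ sp : Short Q n, basA sp = cls K Q n PA sp.1.2.2)
    (hα : ∀ {i j l : Q.V} (a : Q.Path i j) (b : Q.Path j l),
      αm (cls K Q n PA a) (cls K Q n PA b) =
        k • ∑ r : ZMod s, aTerm K Q n PA basA s w x a b r)
    (hcoc : ∀ a b c : TA K Q n PA,
      dL K Q n PA a (αm b c) + αm a (b * c) = αm (a * b) c + dR K Q n PA (αm a b) c)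
    (hTmul : ∀ u v : T, eT (u * v) = ((eT u).1 * (eT v).1,
      dL K Q n PA (eT u).1 (eT v).2 + dR K Q n PA (eT u).2 (eT v).1 + αm (eT u).1 (eT v).1))
    (hΦnil : ∀ i : Q.V, Φm (PB.ι (QD.Path.nil (Q := Qe Q t pM) i))
      = eT.symm (cls K Q n PA (QD.Path.nil i), 0))
    (hΦarr : ∀ {i j : Q.V} (a : Q.Ar i j),
      Φm (PB.ι (QD.Path.cons (Sum.inl a) (QD.Path.nil (Q := Qe Q t pM) j)))
      = eT.symm (cls K Q n PA (QD.Path.cons a (QD.Path.nil j)), 0))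
    {h : Q.V} (C : Q.Path h h) (hC : 0 < C.length)
    (hrev : ¬ IsRev K Q n PA αm C) :
    Φm (PB.ι (embed Q t pM C)) = 0 := by
  rw [← eT.map_eq_zero_iff, Fm_embed hTmul hΦnil hΦarr C, Prod.mk_eq_zero]
  refine ⟨hcyc h C hC, ?_⟩
  rcases Nat.lt_or_ge C.length n with hlt | hge
  · exact Gf_short basA hα hs1 C hlt
  · obtain ⟨v, aa, bb, heq, h0, hbl, hG⟩ := Gf_long basA hn hs1 hs2 hbas hα hcoc C hge
    by_cases hz : αm (cls K Q n PA aa) (cls K Q n PA bb) = 0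
    · rw [hG, hz]
    · exfalso
      apply hrev
      refine ⟨v, aa, bb, h0, by omega, ?_, ?_, heq, hz⟩
      · intro h0'
        exact hz (by rw [h0', map_zero, LinearMap.zero_apply])
      · intro h0'
        exact hz (by rw [h0', map_zero])

end Aux9

section Statements

variable (K : Type) [Field K] (Q : QD) [Fintype Q.V] [∀ i j : Q.V, Fintype (Q.Ar i j)]
variable (n : ℕ) (PA : PathAlg K Q)
variable (basA : Module.Basis (Short Q n) K (TA K Q n PA))
variable (s : ℕ) [NeZero s] (w : ZMod s → Q.V) (x : ∀ i : ZMod s, Q.Ar (w i) (w (i + 1)))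
variable (k : K)
variable (αm : TA K Q n PA →ₗ[K] TA K Q n PA →ₗ[K] Module.Dual K (TA K Q n PA))
variable (t : ℕ) (pM : Fin t → QD.PathIn Q)
variable (T : Type) [Ring T] [Algebra K T]
variable (eT : T ≃ₗ[K] TA K Q n PA × Module.Dual K (TA K Q n PA))
variable (PB : PathAlg K (Qe Q t pM))
variable (Φm : PB.P →ₐ[K] T)

/-- if `u` is a path `i → j` of `KΔ`, `v` a path `j → i` of the extended
quiver and neither `uv` nor `vu` is `α`-revived, then `vu ∈ Ker Φ ↔ uv ∈ Ker Φ`. -/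
theorem stmt9
    [IsAlgClosed K]
    (hn : 2 ≤ n)
    (hdim : 1 < Module.finrank K (TA K Q n PA))
    (hconn : ∀ i j : Q.V,
      Relation.EqvGen (fun u v : Q.V => Nonempty (Q.Ar u v) ∨ Nonempty (Q.Ar v u)) i j)
    (hcyc : ∀ (i : Q.V) (p : Q.Path i i), 0 < p.length → cls K Q n PA p = 0)
    (hbas : ∀ sp : Short Q n, basA sp = cls K Q n PA sp.1.2.2)
    (hs1 : n + 1 ≤ s) (hs2 : s ≤ 2 * n - 2)
    (hk : k ≠ 0)
    (hα : ∀ {i j l : Q.V} (a : Q.Path i j) (b : Q.Path j l),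
      αm (cls K Q n PA a) (cls K Q n PA b) =
        k • ∑ r : ZMod s, aTerm K Q n PA basA s w x a b r)
    (hcoc : ∀ a b c : TA K Q n PA,
      dL K Q n PA a (αm b c) + αm a (b * c) = αm (a * b) c + dR K Q n PA (αm a b) c)
    (hMlt : ∀ m : Fin t, (pM m).2.2.length < n)
    (hMli : LinearIndependent K fun m : Fin t => cls K Q n PA (pM m).2.2)
    (hMsp : Submodule.span K (Set.range fun m : Fin t => cls K Q n PA (pM m).2.2)
      = socA K Q n PA)
    (hTmul : ∀ u v : T, eT (u * v) = ((eT u).1 * (eT v).1,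
      dL K Q n PA (eT u).1 (eT v).2 + dR K Q n PA (eT u).2 (eT v).1 + αm (eT u).1 (eT v).1))
    (hTone : eT 1 = (1, 0))
    (hΦnil : ∀ i : Q.V, Φm (PB.ι (QD.Path.nil (Q := Qe Q t pM) i))
      = eT.symm (cls K Q n PA (QD.Path.nil i), 0))
    (hΦarr : ∀ {i j : Q.V} (a : Q.Ar i j),
      Φm (PB.ι (QD.Path.cons (Sum.inl a) (QD.Path.nil (Q := Qe Q t pM) j)))
      = eT.symm (cls K Q n PA (QD.Path.cons a (QD.Path.nil j)), 0))
    (hΦy : ∀ m : Fin t,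
      Φm (PB.ι (QD.Path.cons (yArr Q t pM m) (QD.Path.nil (Q := Qe Q t pM) (pM m).1)))
      = eT.symm (0, coordP K Q n PA basA (pM m)))
    (hΦsurj : Function.Surjective Φm)
    {i j : Q.V} (u : Q.Path i j) (v : (Qe Q t pM).Path j i)
    (h1 : ¬ IsRevE K Q n PA αm t pM ((embed Q t pM u).comp v))
    (h2 : ¬ IsRevE K Q n PA αm t pM (v.comp (embed Q t pM u))) :
    Φm (PB.ι (v.comp (embed Q t pM u))) = 0 ↔ Φm (PB.ι ((embed Q t pM u).comp v)) = 0 := by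
  rcases Nat.lt_or_ge (numY Q t pM v) 2 with hlt | hge
  · have h01 : numY Q t pM v = 0 ∨ numY Q t pM v = 1 := by omega
    rcases h01 with h0 | h1
    · -- no y-arrows in v
      obtain ⟨v₀, rfl⟩ := numY_zero v h0
      cases u with
      | nil =>
        rw [show embed Q t pM (QD.Path.nil i) = QD.Path.nil (Q := Qe Q t pM) i from rfl,
          pcomp_nil, pnil_comp]
      | cons a₁ u₁ =>
        have hVU : (embed Q t pM v₀).comp (embed Q t pM (QD.Path.cons a₁ u₁))
            = embed Q t pM (v₀.comp (QD.Path.cons a₁ u₁)) := (embed_comp' t pM _ _).symm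
        have hUV : (embed Q t pM (QD.Path.cons a₁ u₁)).comp (embed Q t pM v₀)
            = embed Q t pM ((QD.Path.cons a₁ u₁).comp v₀) := (embed_comp' t pM _ _).symm
        have hz1 : Φm (PB.ι ((embed Q t pM v₀).comp
            (embed Q t pM (QD.Path.cons a₁ u₁)))) = 0 := by
          rw [hVU]
          apply cyc_zero hn hs1 hs2 hcyc hbas hα hcoc hTmul hΦnil hΦarr
          · rw [plen_comp, plen_cons]; omega
          · intro hrev
            exact h2 ⟨v₀.comp (QD.Path.cons a₁ u₁), hVU, hrev⟩
        have hz2 : Φm (PB.ι ((embed Q t pM (QD.Path.cons a₁ u₁)).comp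
            (embed Q t pM v₀))) = 0 := by
          rw [hUV]
          apply cyc_zero hn hs1 hs2 hcyc hbas hα hcoc hTmul hΦnil hΦarr
          · rw [plen_comp, plen_cons]; omega
          · intro hrev
            exact h1 ⟨(QD.Path.cons a₁ u₁).comp v₀, hUV, hrev⟩
        simp only [hz1, hz2]
    · -- exactly one y-arrow in v
      obtain ⟨m, β₂, β₁, rfl⟩ := numY_one v h1
      have e1 : (((embed Q t pM β₂).comp
            (QD.Path.cons (yArr Q t pM m) (embed Q t pM β₁))).comp (embed Q t pM u))
          = (embed Q t pM β₂).comp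
            (QD.Path.cons (yArr Q t pM m) (embed Q t pM (β₁.comp u))) := by
        rw [pcomp_assoc, pcomp_cons, ← embed_comp' t pM β₁ u]
      have e2 : ((embed Q t pM u).comp ((embed Q t pM β₂).comp
            (QD.Path.cons (yArr Q t pM m) (embed Q t pM β₁))))
          = (embed Q t pM (u.comp β₂)).comp
            (QD.Path.cons (yArr Q t pM m) (embed Q t pM β₁)) := by
        rw [← pcomp_assoc, ← embed_comp' t pM u β₂]
      rw [e1, e2]
      have f1 := Fm_elem hTmul hΦnil hΦarr hΦy m β₂ (β₁.comp u)
      have f2 := Fm_elem hTmul hΦnil hΦarr hΦy m (u.comp β₂) β₁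
      have g1 : Φm (PB.ι ((embed Q t pM β₂).comp
            (QD.Path.cons (yArr Q t pM m) (embed Q t pM (β₁.comp u))))) = 0
          ↔ ¬ (((β₁.comp u).comp β₂).sig = pM m) := by
        rw [← eT.map_eq_zero_iff, f1, Prod.mk_eq_zero]
        simp only [eq_self_iff_true, true_and]
        exact elem_iff t pM hcyc hbas hMlt m β₂ (β₁.comp u)
      have g2 : Φm (PB.ι ((embed Q t pM (u.comp β₂)).comp
            (QD.Path.cons (yArr Q t pM m) (embed Q t pM β₁)))) = 0
          ↔ ¬ ((β₁.comp (u.comp β₂)).sig = pM m) := by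
        rw [← eT.map_eq_zero_iff, f2, Prod.mk_eq_zero]
        simp only [eq_self_iff_true, true_and]
        exact elem_iff t pM hcyc hbas hMlt m (u.comp β₂) β₁
      rw [g1, g2, pcomp_assoc]
  · -- at least two y-arrows in v
    have hz1 : Φm (PB.ι (v.comp (embed Q t pM u))) = 0 := by
      rw [← eT.map_eq_zero_iff]
      exact Y_two hTmul hΦarr hΦy _
        (by rw [numY_comp t pM v (embed Q t pM u), numY_embed]; omega)
    have hz2 : Φm (PB.ι ((embed Q t pM u).comp v)) = 0 := by
      rw [← eT.map_eq_zero_iff]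
      exact Y_two hTmul hΦarr hΦy _
        (by rw [numY_comp t pM (embed Q t pM u) v, numY_embed]; omega)
    simp only [hz1, hz2]

end Statements
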